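/- Let $\alpha \in (0,1)$, $T > 0$, $\delta \ge 1$, $C_0 > 0$, and consider the graded mesh. Let $u : [0,T] \to \mathbb{R}$ be continuous on $[0,T]$ and twice continuously differentiable on $(0,T]$ with $|u''(t)| \le C_0\, t^{\alpha-2}$ for all $t \in (0,T]$. Then there exists a constant $C > 0$, depending only on $C_0$, $\alpha$, $\delta$ and $T$, such that for every $N \ge 2$ and every integer $n$ with $2 \le n \le N$, the linearization error satisfies $\Big| u(t_n) - \Big( \big(1 + \tfrac{\tau_n}{\tau_{n-1}}\big) u(t_{n-1}) - \tfrac{\tau_n}{\tau_{n-1}}\, u(t_{n-2}) \Big) \Big| \le C\, N^{-\min\{\delta\alpha,\,2\}}$. -/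

import Mathlib

/-!
Write `a, b, c` for `t (n - 2), t (n - 1), t n`. The linearization error is the Taylor remainder
of `u` at `b` evaluated at `c`, plus `τ n / τ (n - 1)` times the one evaluated at `a`. A Taylor
remainder of `u` is dominated by that of any `w` with `|u''| ≤ w''`, because `w + u` and `w - u`
are convex and so lie above their tangents.

Away from the origin take `w` quadratic with curvature `C₀ a ^ (α - 2)`. On the graded mesh
`a ≥ T (n / (3N)) ^ δ` and every step up to `n` is at most `δ T (n / N) ^ (δ - 1) / N`, so both
remainders are `O(n ^ (δα - 2) N ^ (-δα)) = O(N ^ (-min (δα) 2))`. On `[0, t 1]`, where `u''` may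
be unbounded, take `w s = C₀ s ^ α / (α (α - 1))` instead: the remainder is `O(t 1 ^ α)`, which is
`O(N ^ (-δα))`, and `τ 2 / τ 1 = 2 ^ δ - 1`.
-/

open Set

theorem ConvexOn.add_mul_sub_le_of_hasDerivAt {S : Set ℝ} {f : ℝ → ℝ} {f' x y : ℝ}
    (hf : ConvexOn ℝ S f) (hx : x ∈ S) (hy : y ∈ S) (hfx : HasDerivAt f f' x) :
    f x + f' * (y - x) ≤ f y := by
  rcases lt_trichotomy x y with hxy | rfl | hyx
  · have h := hf.le_slope_of_hasDerivAt hx hy hxy hfx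
    rw [slope_def_field, le_div_iff₀ (sub_pos.2 hxy)] at h
    linarith
  · simp
  · have h := hf.slope_le_of_hasDerivAt hy hx hyx hfx
    rw [slope_def_field, div_le_iff₀ (sub_pos.2 hyx)] at h
    linarith

section Comparison

variable {D : Set ℝ} {u u' u'' w w' w'' : ℝ → ℝ}

theorem convexOn_add_mul_of_abs_deriv2_le (hD : Convex ℝ D) {ε : ℝ} (hε : |ε| ≤ 1)
    (hu : ContinuousOn u D) (hu' : ∀ s ∈ interior D, HasDerivAt u (u' s) s)
    (hu'' : ∀ s ∈ interior D, HasDerivAt u' (u'' s) s)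
    (hw : ContinuousOn w D) (hw' : ∀ s ∈ interior D, HasDerivAt w (w' s) s)
    (hw'' : ∀ s ∈ interior D, HasDerivAt w' (w'' s) s)
    (hle : ∀ s ∈ interior D, |u'' s| ≤ w'' s) :
    ConvexOn ℝ D (fun s => w s + ε * u s) := by
  refine convexOn_of_hasDerivWithinAt2_nonneg hD (hw.add (hu.const_smul ε))
    (fun s hs => ((hw' s hs).add ((hu' s hs).const_mul ε)).hasDerivWithinAt)
    (fun s hs => ((hw'' s hs).add ((hu'' s hs).const_mul ε)).hasDerivWithinAt) fun s hs => ?_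
  have : |ε * u'' s| ≤ w'' s := by
    rw [abs_mul]
    exact (mul_le_of_le_one_left (abs_nonneg _) hε).trans (hle s hs)
  linarith [neg_abs_le (ε * u'' s)]

theorem abs_sub_sub_mul_le_of_abs_deriv2_le (hD : Convex ℝ D)
    (hu : ContinuousOn u D) (hu' : ∀ s ∈ interior D, HasDerivAt u (u' s) s)
    (hu'' : ∀ s ∈ interior D, HasDerivAt u' (u'' s) s)
    (hw : ContinuousOn w D) (hw' : ∀ s ∈ interior D, HasDerivAt w (w' s) s)
    (hw'' : ∀ s ∈ interior D, HasDerivAt w' (w'' s) s)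
    (hle : ∀ s ∈ interior D, |u'' s| ≤ w'' s) {x y : ℝ} (hx : x ∈ D) (hy : y ∈ D)
    (hux : HasDerivAt u (u' x) x) (hwx : HasDerivAt w (w' x) x) :
    |u y - u x - u' x * (y - x)| ≤ w y - w x - w' x * (y - x) := by
  have tangent (ε : ℝ) (hε : |ε| ≤ 1) :
      -(w y - w x - w' x * (y - x)) ≤ ε * (u y - u x - u' x * (y - x)) := by
    have := (convexOn_add_mul_of_abs_deriv2_le hD hε hu hu' hu'' hw hw' hw'' hle
      ).add_mul_sub_le_of_hasDerivAt hx hy (hwx.add (hux.const_mul ε))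
    linear_combination this
  rw [abs_le]
  constructor
  · simpa using tangent 1 (by simp)
  · linarith [tangent (-1) (by simp)]

theorem abs_sub_sub_mul_le_of_abs_deriv2_le_const {a b M x y : ℝ}
    (hu' : ∀ s ∈ Icc a b, HasDerivAt u (u' s) s)
    (hu'' : ∀ s ∈ Icc a b, HasDerivAt u' (u'' s) s)
    (hM : ∀ s ∈ Icc a b, |u'' s| ≤ M) (hx : x ∈ Icc a b) (hy : y ∈ Icc a b) :
    |u y - u x - u' x * (y - x)| ≤ M / 2 * (y - x) ^ 2 := by
  have hw' (s : ℝ) : HasDerivAt (fun s => M / 2 * s ^ 2) (M * s) s := by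
    refine ((hasDerivAt_pow 2 s).const_mul (M / 2)).congr_deriv ?_
    norm_num
    ring
  have hw'' (s : ℝ) : HasDerivAt (fun s => M * s) M s := by
    simpa using (hasDerivAt_id s).const_mul M
  have hint : interior (Icc a b) ⊆ Icc a b := interior_subset
  have := abs_sub_sub_mul_le_of_abs_deriv2_le (convex_Icc a b)
    (fun s hs => (hu' s hs).continuousAt.continuousWithinAt) (fun s hs => hu' s (hint hs))
    (fun s hs => hu'' s (hint hs)) (by fun_prop) (fun s _ => hw' s) (fun s _ => hw'' s)
    (fun s hs => hM s (hint hs)) hx hy (hu' x hx) (hw' x)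
  linear_combination this

theorem abs_sub_add_mul_le_rpow_of_abs_deriv2_le {b α C : ℝ} (hb : 0 < b) (hα : 0 < α)
    (hα1 : α ≠ 1) (hu : ContinuousOn u (Icc 0 b)) (hu' : ∀ s ∈ Ioc 0 b, HasDerivAt u (u' s) s)
    (hu'' : ∀ s ∈ Ioo 0 b, HasDerivAt u' (u'' s) s)
    (hbound : ∀ s ∈ Ioo 0 b, |u'' s| ≤ C * s ^ (α - 2)) :
    |u 0 - u b + u' b * b| ≤ C / α * b ^ α := by
  have hα1' : α - 1 ≠ 0 := sub_ne_zero.2 hα1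
  have hw' {s : ℝ} (hs : 0 < s) :
      HasDerivAt (fun s => C / (α * (α - 1)) * s ^ α) (C / (α - 1) * s ^ (α - 1)) s := by
    refine ((Real.hasDerivAt_rpow_const (Or.inl hs.ne')).const_mul _).congr_deriv ?_
    field_simp
  have hw'' {s : ℝ} (hs : 0 < s) :
      HasDerivAt (fun s => C / (α - 1) * s ^ (α - 1)) (C * s ^ (α - 2)) s := by
    refine ((Real.hasDerivAt_rpow_const (Or.inl hs.ne')).const_mul _).congr_deriv ?_
    rw [show α - 1 - 1 = α - 2 by ring]
    field_simp
  rw [← interior_Icc] at hu'' hbound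
  have := abs_sub_sub_mul_le_of_abs_deriv2_le (w := fun s => C / (α * (α - 1)) * s ^ α)
    (convex_Icc 0 b) hu
    (fun s hs => hu' s (Ioo_subset_Ioc_self (by rwa [interior_Icc] at hs))) hu''
    (continuous_const.mul (Real.continuous_rpow_const hα.le)).continuousOn
    (fun s hs => hw' (by rw [interior_Icc] at hs; exact hs.1))
    (fun s hs => hw'' (by rw [interior_Icc] at hs; exact hs.1)) hbound
    (right_mem_Icc.2 hb.le) (left_mem_Icc.2 hb.le) (hu' b (right_mem_Ioc.2 hb)) (hw' hb)
  rw [Real.zero_rpow hα.ne', Real.rpow_sub_one hb.ne'] at this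
  convert this using 1
  · ring_nf
  · field_simp
    ring

theorem abs_sub_sub_mul_le_of_abs_deriv2_le_rpow {T C₀ α a b x y : ℝ} (hC₀ : 0 ≤ C₀)
    (hα : α ≤ 2) (ha : 0 < a) (hbT : b ≤ T)
    (hu' : ∀ s ∈ Ioc 0 T, HasDerivAt u (u' s) s)
    (hu'' : ∀ s ∈ Ioc 0 T, HasDerivAt u' (u'' s) s)
    (hbound : ∀ s ∈ Ioc 0 T, |u'' s| ≤ C₀ * s ^ (α - 2)) (hx : x ∈ Icc a b) (hy : y ∈ Icc a b) :
    |u y - u x - u' x * (y - x)| ≤ C₀ * a ^ (α - 2) / 2 * (y - x) ^ 2 := by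
  have hsub : Icc a b ⊆ Ioc 0 T := Icc_subset_Ioc ha hbT
  refine abs_sub_sub_mul_le_of_abs_deriv2_le_const (fun s hs => hu' s (hsub hs))
    (fun s hs => hu'' s (hsub hs)) (fun s hs => ?_) hx hy
  exact (hbound s (hsub hs)).trans
    (mul_le_mul_of_nonneg_left (Real.rpow_le_rpow_of_nonpos ha hs.1 (by linarith)) hC₀)

end Comparison

theorem rpow_sub_two_div_sq_le_rpow_neg_min {n N p : ℝ} (hn : 1 ≤ n) (hnN : n ≤ N) :
    (n / N) ^ (p - 2) / N ^ 2 ≤ N ^ (-min p 2) := by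
  have hN : 0 < N := by linarith
  rcases le_total p 2 with hp | hp
  · calc (n / N) ^ (p - 2) / N ^ 2 ≤ (1 / N) ^ (p - 2) / N ^ 2 := by
          gcongr (?_ / _)
          exact Real.rpow_le_rpow_of_nonpos (by positivity) (by gcongr) (by linarith)
      _ = N ^ (-min p 2) := by
          rw [min_eq_left hp, one_div, Real.inv_rpow hN.le, ← Real.rpow_neg hN.le,
            ← Real.rpow_natCast, ← Real.rpow_sub hN]
          norm_num
  · calc (n / N) ^ (p - 2) / N ^ 2 ≤ 1 / N ^ 2 := by
          gcongr
          exact Real.rpow_le_one (by positivity) ((div_le_one hN).2 hnN) (by linarith)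
      _ = N ^ (-min p 2) := by
          rw [min_eq_right hp, Real.rpow_neg hN.le, one_div]
          norm_cast

/-- `linearizationError u (t (n - 2)) (t (n - 1)) (t n)` is `u (t n) - ũⁿ⁻¹`. -/
noncomputable def linearizationError (f : ℝ → ℝ) (a b c : ℝ) : ℝ :=
  f c - ((1 + (c - b) / (b - a)) * f b - (c - b) / (b - a) * f a)

theorem linearizationError_eq (f : ℝ → ℝ) (d : ℝ) {a b c : ℝ} (hab : a ≠ b) :
    linearizationError f a b c =
      (f c - f b - d * (c - b)) + (c - b) / (b - a) * (f a - f b - d * (a - b)) := by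
  have : b - a ≠ 0 := sub_ne_zero.2 hab.symm
  unfold linearizationError
  field_simp
  ring

noncomputable def gradedMesh (T δ : ℝ) (N m : ℕ) : ℝ := T * ((m : ℝ) / N) ^ δ

section GradedMesh

variable {T δ : ℝ} {N : ℕ}

local notation "𝐭" => gradedMesh T δ N

theorem gradedMesh_zero (hδ : δ ≠ 0) : 𝐭 0 = 0 := by
  simp [gradedMesh, Real.zero_rpow hδ]

theorem gradedMesh_strictMono (hT : 0 < T) (hδ : 0 < δ) (hN : 0 < N) : StrictMono 𝐭 := by
  intro m k hmk
  unfold gradedMesh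
  gcongr

theorem gradedMesh_le (hT : 0 ≤ T) (hδ : 0 ≤ δ) {m : ℕ} (hmN : m ≤ N) : 𝐭 m ≤ T := by
  refine mul_le_of_le_one_right hT (Real.rpow_le_one (by positivity) ?_ hδ)
  exact div_le_one_of_le₀ (by exact_mod_cast hmN) (Nat.cast_nonneg N)

theorem gradedMesh_succ_sub_le (hT : 0 ≤ T) (hδ : 1 ≤ δ) {k n : ℕ} (hkn : k + 1 ≤ n) :
    𝐭 (k + 1) - 𝐭 k ≤ δ * T * ((n : ℝ) / N) ^ (δ - 1) / N := by
  set x : ℝ := (k + 1 : ℕ) / N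
  have hx : 0 ≤ x := by positivity
  have tangent := (convexOn_rpow hδ).add_mul_sub_le_of_hasDerivAt (mem_Ici.2 hx)
    (mem_Ici.2 (by positivity : (0 : ℝ) ≤ (k : ℝ) / N))
    (Real.hasDerivAt_rpow_const (x := x) (Or.inr hδ))
  have hxk : (k : ℝ) / N - x = -(1 / N) := by
    simp only [x]; push_cast; ring
  have hxn : x ^ (δ - 1) ≤ ((n : ℝ) / N) ^ (δ - 1) := by
    gcongr
    exact div_le_div_of_nonneg_right (by exact_mod_cast hkn) (Nat.cast_nonneg N)
  rw [hxk] at tangent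
  calc 𝐭 (k + 1) - 𝐭 k = T * (x ^ δ - ((k : ℝ) / N) ^ δ) := by
        simp only [gradedMesh, x]; ring
    _ ≤ T * (δ * x ^ (δ - 1) * (1 / N)) := by gcongr; linarith
    _ = δ * T * x ^ (δ - 1) / N := by ring
    _ ≤ δ * T * ((n : ℝ) / N) ^ (δ - 1) / N := by gcongr

theorem rpow_gradedMesh_mul_sq_le (hT : 0 < T) (hδ : 0 ≤ δ) {α : ℝ} (hα : α ≤ 2) {j n : ℕ}
    (hn : 1 ≤ n) (hnj : n ≤ 3 * j) (hnN : n ≤ N) :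
    𝐭 j ^ (α - 2) * (δ * T * ((n : ℝ) / N) ^ (δ - 1) / N) ^ 2 ≤
      3 ^ (δ * (2 - α)) * δ ^ 2 * T ^ α * (N : ℝ) ^ (-min (δ * α) 2) := by
  have hn' : (1 : ℝ) ≤ n := by exact_mod_cast hn
  have hnN' : (n : ℝ) ≤ N := by exact_mod_cast hnN
  have hN : (0 : ℝ) < N := by linarith
  set q : ℝ := n / N
  have hq : 0 < q := by positivity
  have hjq : q / 3 ≤ (j : ℝ) / N := by
    rw [div_right_comm, div_le_div_iff_of_pos_right hN, div_le_iff₀ (by norm_num)]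
    exact_mod_cast (by omega : n ≤ j * 3)
  have hmesh : 𝐭 j ^ (α - 2) ≤ T ^ (α - 2) * (3 ^ (δ * (2 - α)) * q ^ (δ * (α - 2))) :=
    calc 𝐭 j ^ (α - 2) ≤ (T * (q / 3) ^ δ) ^ (α - 2) :=
          Real.rpow_le_rpow_of_nonpos (by positivity) (by unfold gradedMesh; gcongr)
            (by linarith)
      _ = T ^ (α - 2) * (3 ^ (δ * (2 - α)) * q ^ (δ * (α - 2))) := by
          rw [Real.mul_rpow hT.le (by positivity), ← Real.rpow_mul (by positivity),
            Real.div_rpow hq.le (by norm_num), div_eq_mul_inv, ← Real.rpow_neg (by norm_num)]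
          ring_nf
  calc 𝐭 j ^ (α - 2) * (δ * T * q ^ (δ - 1) / N) ^ 2
      ≤ T ^ (α - 2) * (3 ^ (δ * (2 - α)) * q ^ (δ * (α - 2))) *
          (δ * T * q ^ (δ - 1) / N) ^ 2 := by
        gcongr
    _ = 3 ^ (δ * (2 - α)) * δ ^ 2 * (T ^ (α - 2) * T ^ (2 : ℝ)) *
          (q ^ (δ * (α - 2)) * q ^ (δ - 1) * q ^ (δ - 1) / N ^ 2) := by
        rw [Real.rpow_two]; ring
    _ = 3 ^ (δ * (2 - α)) * δ ^ 2 * T ^ α * (q ^ (δ * α - 2) / N ^ 2) := by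
        rw [← Real.rpow_add hT, ← Real.rpow_add hq, ← Real.rpow_add hq]
        ring_nf
    _ ≤ 3 ^ (δ * (2 - α)) * δ ^ 2 * T ^ α * (N : ℝ) ^ (-min (δ * α) 2) := by
        gcongr
        exact rpow_sub_two_div_sq_le_rpow_neg_min hn' hnN'

theorem gradedMesh_ratio_mul_rpow_le (hT : 0 < T) (hδ : 0 < δ) (hN : 1 ≤ N) (α : ℝ) :
    (𝐭 2 - 𝐭 1) / (𝐭 1 - 𝐭 0) * 𝐭 1 ^ α ≤ 2 ^ δ * T ^ α * (N : ℝ) ^ (-min (δ * α) 2) := by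
  have hN' : (1 : ℝ) ≤ N := by exact_mod_cast hN
  have h1 : 𝐭 1 = T * (N : ℝ) ^ (-δ) := by
    rw [gradedMesh, Nat.cast_one, one_div, Real.inv_rpow (by positivity),
      Real.rpow_neg (by positivity)]
  have h2 : 𝐭 2 = 2 ^ δ * 𝐭 1 := by
    rw [h1, gradedMesh, Real.div_rpow (by norm_num) (by positivity),
      Real.rpow_neg (by positivity)]
    push_cast
    ring
  have h1pos : 0 < 𝐭 1 := by rw [h1]; positivity
  rw [gradedMesh_zero hδ.ne', h2, sub_zero, ← sub_one_mul, mul_div_assoc, div_self h1pos.ne',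
    mul_one, h1, Real.mul_rpow hT.le (by positivity), ← Real.rpow_mul (by positivity)]
  calc (2 ^ δ - 1) * (T ^ α * (N : ℝ) ^ (-δ * α))
      ≤ 2 ^ δ * (T ^ α * (N : ℝ) ^ (-min (δ * α) 2)) := by
        gcongr
        · exact sub_le_self _ zero_le_one
        · rw [neg_mul]; exact neg_le_neg (min_le_left _ _)
    _ = 2 ^ δ * T ^ α * (N : ℝ) ^ (-min (δ * α) 2) := by ring

variable {C₀ α : ℝ} {u u' u'' : ℝ → ℝ}

theorem abs_taylor_forward_gradedMesh_le (hT : 0 < T) (hδ : 1 ≤ δ) (hC₀ : 0 ≤ C₀)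
    (hα : α ≤ 2) {m : ℕ} (hmN : m + 2 ≤ N)
    (hu' : ∀ s ∈ Ioc 0 T, HasDerivAt u (u' s) s)
    (hu'' : ∀ s ∈ Ioc 0 T, HasDerivAt u' (u'' s) s)
    (hbound : ∀ s ∈ Ioc 0 T, |u'' s| ≤ C₀ * s ^ (α - 2)) :
    |u (𝐭 (m + 2)) - u (𝐭 (m + 1)) - u' (𝐭 (m + 1)) * (𝐭 (m + 2) - 𝐭 (m + 1))| ≤
      C₀ / 2 * (3 ^ (δ * (2 - α)) * δ ^ 2 * T ^ α) * (N : ℝ) ^ (-min (δ * α) 2) := by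
  have hmono : StrictMono 𝐭 := gradedMesh_strictMono hT (by linarith) (by omega)
  have hpos : 0 < 𝐭 (m + 1) := gradedMesh_zero (zero_lt_one.trans_le hδ).ne' ▸ hmono m.succ_pos
  have hle : 𝐭 (m + 1) ≤ 𝐭 (m + 2) := (hmono (by omega)).le
  have hstep := gradedMesh_succ_sub_le (N := N) hT.le hδ (le_refl (m + 2))
  calc _ ≤ C₀ * 𝐭 (m + 1) ^ (α - 2) / 2 * (𝐭 (m + 2) - 𝐭 (m + 1)) ^ 2 :=
        abs_sub_sub_mul_le_of_abs_deriv2_le_rpow hC₀ hα hpos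
          (gradedMesh_le hT.le (by linarith) hmN) hu' hu'' hbound
          (left_mem_Icc.2 hle) (right_mem_Icc.2 hle)
    _ ≤ C₀ / 2 * (𝐭 (m + 1) ^ (α - 2) * (δ * T * (((m + 2 : ℕ) : ℝ) / N) ^ (δ - 1) / N) ^ 2) := by
        rw [mul_div_right_comm, mul_assoc]
        gcongr
    _ ≤ C₀ / 2 * (3 ^ (δ * (2 - α)) * δ ^ 2 * T ^ α * (N : ℝ) ^ (-min (δ * α) 2)) := by
        refine mul_le_mul_of_nonneg_left ?_ (by positivity)
        exact rpow_gradedMesh_mul_sq_le hT (by linarith) hα (by omega)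
          (by omega : m + 2 ≤ 3 * (m + 1)) hmN
    _ = _ := by ring

theorem gradedMesh_ratio_mul_abs_taylor_backward_le (hT : 0 < T) (hδ : 1 ≤ δ) (hC₀ : 0 ≤ C₀)
    (hα : α ≤ 2) {m : ℕ} (hm : 1 ≤ m) (hmN : m + 2 ≤ N)
    (hu' : ∀ s ∈ Ioc 0 T, HasDerivAt u (u' s) s)
    (hu'' : ∀ s ∈ Ioc 0 T, HasDerivAt u' (u'' s) s)
    (hbound : ∀ s ∈ Ioc 0 T, |u'' s| ≤ C₀ * s ^ (α - 2)) :
    (𝐭 (m + 2) - 𝐭 (m + 1)) / (𝐭 (m + 1) - 𝐭 m) *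
        |u (𝐭 m) - u (𝐭 (m + 1)) - u' (𝐭 (m + 1)) * (𝐭 m - 𝐭 (m + 1))| ≤
      C₀ / 2 * (3 ^ (δ * (2 - α)) * δ ^ 2 * T ^ α) * (N : ℝ) ^ (-min (δ * α) 2) := by
  have hmono : StrictMono 𝐭 := gradedMesh_strictMono hT (by linarith) (by omega)
  have hpos : 0 < 𝐭 m := gradedMesh_zero (zero_lt_one.trans_le hδ).ne' ▸ hmono hm
  have hlt : 𝐭 m < 𝐭 (m + 1) := hmono m.lt_succ_self
  have hσ : 0 < 𝐭 (m + 1) - 𝐭 m := sub_pos.2 hlt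
  have hτ : 0 ≤ 𝐭 (m + 2) - 𝐭 (m + 1) := sub_nonneg.2 (hmono (by omega)).le
  have hτH := gradedMesh_succ_sub_le (N := N) hT.le hδ (le_refl (m + 2))
  have hσH := gradedMesh_succ_sub_le (N := N) hT.le hδ (by omega : m + 1 ≤ m + 2)
  calc _ ≤ (𝐭 (m + 2) - 𝐭 (m + 1)) / (𝐭 (m + 1) - 𝐭 m) *
        (C₀ * 𝐭 m ^ (α - 2) / 2 * (𝐭 m - 𝐭 (m + 1)) ^ 2) := by
        gcongr
        exact abs_sub_sub_mul_le_of_abs_deriv2_le_rpow hC₀ hα hpos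
          (gradedMesh_le hT.le (by linarith) (by omega)) hu' hu'' hbound
          (right_mem_Icc.2 hlt.le) (left_mem_Icc.2 hlt.le)
    _ = C₀ / 2 * (𝐭 m ^ (α - 2) * ((𝐭 (m + 2) - 𝐭 (m + 1)) * (𝐭 (m + 1) - 𝐭 m))) := by
        field_simp
        ring
    _ ≤ C₀ / 2 * (𝐭 m ^ (α - 2) * (δ * T * (((m + 2 : ℕ) : ℝ) / N) ^ (δ - 1) / N) ^ 2) := by
        rw [sq]
        gcongr
    _ ≤ C₀ / 2 * (3 ^ (δ * (2 - α)) * δ ^ 2 * T ^ α * (N : ℝ) ^ (-min (δ * α) 2)) := by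
        refine mul_le_mul_of_nonneg_left ?_ (by positivity)
        exact rpow_gradedMesh_mul_sq_le hT (by linarith) hα (by omega)
          (by omega : m + 2 ≤ 3 * m) hmN
    _ = _ := by ring

theorem gradedMesh_ratio_mul_abs_taylor_backward_zero_le (hT : 0 < T) (hδ : 1 ≤ δ)
    (hC₀ : 0 ≤ C₀) (hα : α ∈ Ioo 0 1) (hN : 2 ≤ N) (hu : ContinuousOn u (Icc 0 T))
    (hu' : ∀ s ∈ Ioc 0 T, HasDerivAt u (u' s) s)
    (hu'' : ∀ s ∈ Ioc 0 T, HasDerivAt u' (u'' s) s)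
    (hbound : ∀ s ∈ Ioc 0 T, |u'' s| ≤ C₀ * s ^ (α - 2)) :
    (𝐭 2 - 𝐭 1) / (𝐭 1 - 𝐭 0) * |u (𝐭 0) - u (𝐭 1) - u' (𝐭 1) * (𝐭 0 - 𝐭 1)| ≤
      C₀ * (2 ^ δ * T ^ α / α) * (N : ℝ) ^ (-min (δ * α) 2) := by
  have hmono : StrictMono 𝐭 := gradedMesh_strictMono hT (by linarith) (by omega)
  have h0 : 𝐭 0 = 0 := gradedMesh_zero (zero_lt_one.trans_le hδ).ne'
  have hratio : 0 ≤ (𝐭 2 - 𝐭 1) / (𝐭 1 - 𝐭 0) :=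
    div_nonneg (sub_nonneg.2 (hmono one_lt_two).le) (sub_nonneg.2 (hmono zero_lt_one).le)
  set b := 𝐭 1
  have hb : 0 < b := h0 ▸ hmono zero_lt_one
  have hsub : Ioc 0 b ⊆ Ioc 0 T :=
    Ioc_subset_Ioc_right (gradedMesh_le hT.le (by linarith) (by omega))
  have htaylor := abs_sub_add_mul_le_rpow_of_abs_deriv2_le hb hα.1 hα.2.ne
    (hu.mono (Icc_subset_Icc_right (hsub (right_mem_Ioc.2 hb)).2))
    (fun s hs => hu' s (hsub hs)) (fun s hs => hu'' s (hsub (Ioo_subset_Ioc_self hs)))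
    (fun s hs => hbound s (hsub (Ioo_subset_Ioc_self hs)))
  calc _ ≤ (𝐭 2 - b) / (b - 𝐭 0) * (C₀ / α * b ^ α) := by
        gcongr
        rw [h0, show u 0 - u b - u' b * (0 - b) = u 0 - u b + u' b * b by ring]
        exact htaylor
    _ = C₀ / α * ((𝐭 2 - b) / (b - 𝐭 0) * b ^ α) := by ring
    _ ≤ C₀ / α * (2 ^ δ * T ^ α * (N : ℝ) ^ (-min (δ * α) 2)) := by
        refine mul_le_mul_of_nonneg_left ?_ (div_nonneg hC₀ hα.1.le)
        exact gradedMesh_ratio_mul_rpow_le hT (by linarith) (by omega) α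
    _ = _ := by ring

theorem abs_linearizationError_gradedMesh_le (hT : 0 < T) (hδ : 1 ≤ δ) (hC₀ : 0 ≤ C₀)
    (hα : α ∈ Ioo 0 1) {m : ℕ} (hmN : m + 2 ≤ N) (hu : ContinuousOn u (Icc 0 T))
    (hu' : ∀ s ∈ Ioc 0 T, HasDerivAt u (u' s) s)
    (hu'' : ∀ s ∈ Ioc 0 T, HasDerivAt u' (u'' s) s)
    (hbound : ∀ s ∈ Ioc 0 T, |u'' s| ≤ C₀ * s ^ (α - 2)) :
    |linearizationError u (𝐭 m) (𝐭 (m + 1)) (𝐭 (m + 2))| ≤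
      C₀ * (3 ^ (δ * (2 - α)) * δ ^ 2 * T ^ α + 2 ^ δ * T ^ α / α) *
        (N : ℝ) ^ (-min (δ * α) 2) := by
  have hmono : StrictMono 𝐭 := gradedMesh_strictMono hT (by linarith) (by omega)
  have hratio : 0 ≤ (𝐭 (m + 2) - 𝐭 (m + 1)) / (𝐭 (m + 1) - 𝐭 m) :=
    div_nonneg (sub_nonneg.2 (hmono (by omega)).le) (sub_nonneg.2 (hmono (by omega)).le)
  have hforward :=
    abs_taylor_forward_gradedMesh_le hT hδ hC₀ (by linarith [hα.2]) hmN hu' hu'' hbound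
  have hbackward : (𝐭 (m + 2) - 𝐭 (m + 1)) / (𝐭 (m + 1) - 𝐭 m) *
        |u (𝐭 m) - u (𝐭 (m + 1)) - u' (𝐭 (m + 1)) * (𝐭 m - 𝐭 (m + 1))| ≤
      C₀ * (3 ^ (δ * (2 - α)) * δ ^ 2 * T ^ α / 2 + 2 ^ δ * T ^ α / α) *
        (N : ℝ) ^ (-min (δ * α) 2) := by
    rcases Nat.eq_zero_or_pos m with rfl | hm
    · refine (gradedMesh_ratio_mul_abs_taylor_backward_zero_le hT hδ hC₀ hα hmN hu hu' hu''
        hbound).trans ?_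
      gcongr
      exact le_add_of_nonneg_left (by positivity)
    · refine (gradedMesh_ratio_mul_abs_taylor_backward_le hT hδ hC₀ (by linarith [hα.2]) hm
        hmN hu' hu'' hbound).trans ?_
      rw [div_mul_comm, mul_comm _ C₀]
      gcongr
      exact le_add_of_nonneg_right (div_nonneg (by positivity) hα.1.le)
  rw [linearizationError_eq u (u' (𝐭 (m + 1))) (hmono m.lt_succ_self).ne]
  calc _ ≤ _ := (abs_add_le _ _).trans_eq (by rw [abs_mul, abs_of_nonneg hratio])
    _ ≤ _ := add_le_add hforward hbackward
    _ = _ := by ring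

end GradedMesh

/-- On the graded mesh, if `u` is continuous on `[0,T]` and twice continuously
differentiable on `(0,T]` with `|u''(t)| ≤ C₀ t^(α-2)`, then the extrapolation
(linearization) error satisfies
`|u (t n) - ((1 + τ n / τ (n-1)) u (t (n-1)) - (τ n / τ (n-1)) u (t (n-2)))|
  ≤ C * N^(-min(δα, 2))`. -/
theorem graded_mesh_linearization_error
    (α T δ C₀ : ℝ) (hα : α ∈ Set.Ioo (0 : ℝ) 1) (hT : 0 < T) (hδ : 1 ≤ δ)
    (hC₀ : 0 < C₀) :
    ∃ C : ℝ, 0 < C ∧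
      ∀ (N : ℕ), 2 ≤ N →
        ∀ (t τ : ℕ → ℝ), (∀ m, t m = T * ((m : ℝ) / (N : ℝ)) ^ δ) →
          (∀ m, 1 ≤ m → τ m = t m - t (m - 1)) →
          ∀ (u u' u'' : ℝ → ℝ),
            ContinuousOn u (Set.Icc 0 T) →
            (∀ s ∈ Set.Ioc (0 : ℝ) T, HasDerivAt u (u' s) s) →
            (∀ s ∈ Set.Ioc (0 : ℝ) T, HasDerivAt u' (u'' s) s) →
            ContinuousOn u'' (Set.Ioc 0 T) →
            (∀ s ∈ Set.Ioc (0 : ℝ) T, |u'' s| ≤ C₀ * s ^ (α - 2)) →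
            ∀ n, 2 ≤ n → n ≤ N →
              |u (t n) - ((1 + τ n / τ (n - 1)) * u (t (n - 1)) -
                  (τ n / τ (n - 1)) * u (t (n - 2)))| ≤
                C * (N : ℝ) ^ (-(min (δ * α) 2)) := by
  have hα₀ := hα.1
  refine ⟨C₀ * (3 ^ (δ * (2 - α)) * δ ^ 2 * T ^ α + 2 ^ δ * T ^ α / α), by positivity, ?_⟩
  intro N hN t τ ht hτ u u' u'' hu hu' hu'' _ hbound n hn hnN
  obtain rfl : t = gradedMesh T δ N := funext ht
  obtain ⟨m, rfl⟩ : ∃ m, n = m + 2 := ⟨n - 2, by omega⟩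
  rw [hτ (m + 2) (by omega), hτ (m + 2 - 1) (by omega),
    show m + 2 - 1 = m + 1 by omega, show m + 1 - 1 = m by omega, Nat.add_sub_cancel]
  exact abs_linearizationError_gradedMesh_le hT hδ hC₀.le hα hnN hu hu' hu'' hbound
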